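/- Let X be a geodesic metric space hyperbolic relative to a collection of peripheral subsets 𝒫 with projection constant C (satisfying properties (1)–(4) of the relative hyperbolicity projection lemma). Let x, y ∈ X and suppose there is a peripheral P ∈ 𝒫 and D ≥ 50C + 1 such that diam(N_C(P) ∩ [x, y]) ≥ D and d_cone(x, z) ≥ D, where z is the point of [x, y] closest to x with d(z, P) ≤ C. Then [x, y] contains a subsegment of length at least 50C + 1 that is 5C-thin; hence the pair (x, y) is not K-anti-contracting for any contraction gauge K with K(5C) ≤ 50C + 1. -/
import Mathlib


open Metric Set
open scoped ENNReal

/-- A geodesic segment in `X`, parametrized by arc length on `[0, len]`. -/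
structure GeoSeg (X : Type*) [MetricSpace X] where
  len : ℝ
  len_nonneg : 0 ≤ len
  f : ℝ → X
  isom : ∀ u ∈ Set.Icc (0:ℝ) len, ∀ v ∈ Set.Icc (0:ℝ) len, dist (f u) (f v) = |u - v|

namespace GeoSeg

variable {X : Type*} [MetricSpace X]

/-- The starting point of a geodesic segment. -/
def src (σ : GeoSeg X) : X := σ.f 0

/-- The endpoint of a geodesic segment. -/
def tgt (σ : GeoSeg X) : X := σ.f σ.len

/-- The image of a geodesic segment. -/
def im (σ : GeoSeg X) : Set X := σ.f '' Set.Icc 0 σ.len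

/-- The midpoint of a geodesic segment. -/
noncomputable def mid (σ : GeoSeg X) : X := σ.f (σ.len / 2)

end GeoSeg

variable {X : Type*} [MetricSpace X]

/-- `σ` is a subsegment of `τ`. -/
def Subseg (σ τ : GeoSeg X) : Prop :=
  ∃ a : ℝ, 0 ≤ a ∧ a + σ.len ≤ τ.len ∧ ∀ t ∈ Set.Icc (0:ℝ) σ.len, σ.f t = τ.f (a + t)

/-- `X` is a geodesic metric space: any two points are joined by a geodesic segment. -/
def GeodSpace (X : Type*) [MetricSpace X] : Prop :=
  ∀ x y : X, ∃ γ : GeoSeg X, γ.src = x ∧ γ.tgt = y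

/-- The set of closest points of `x` on `A` (closest point projection). -/
def ProjSet (A : Set X) (x : X) : Set X :=
  {p | p ∈ A ∧ ∀ q ∈ A, dist x p ≤ dist x q}

/-- The image of the closest point projection of the set `B` onto `A`. -/
def ProjImg (A B : Set X) : Set X := ⋃ x ∈ B, ProjSet A x

/-- The geodesic segment `σ` is `r`-thin: every geodesic quadrangle containing `σ` as a
subsegment of its first side has its other three sides meeting the closed `r`-ball
around the midpoint of `σ`. -/
def IsThin (r : ℝ) (σ : GeoSeg X) : Prop :=
  ∀ γ₁ γ₂ γ₃ γ₄ : GeoSeg X,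
    γ₁.tgt = γ₂.src → γ₂.tgt = γ₃.src → γ₃.tgt = γ₄.src → γ₄.tgt = γ₁.src →
    Subseg σ γ₁ →
    ∃ p ∈ γ₂.im ∪ γ₃.im ∪ γ₄.im, dist p σ.mid ≤ r

/-- The geodesic `γ` is `r`-quadrangle-contracting: every subsegment of length at least
`3r` is `r`-thin. -/
def QuadContracting (r : ℝ) (γ : GeoSeg X) : Prop :=
  ∀ σ : GeoSeg X, Subseg σ γ → 3 * r ≤ σ.len → IsThin r σ

/-- The set `A` has `D`-bounded geodesic image: every geodesic `λ` at distance at least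
`D` from `A` has projection onto `A` of diameter at most `D`. -/
def HasBGI (A : Set X) (D : ℝ) : Prop :=
  ∀ lam : GeoSeg X, (∀ p ∈ lam.im, ∀ q ∈ A, D ≤ dist p q) →
    Metric.diam (ProjImg A lam.im) ≤ D

/-- The set `A` is `C`-(strongly-)contracting. -/
def IsContractingSet (A : Set X) (C : ℝ) : Prop :=
  ∀ x : X, Metric.diam (ProjImg A (Metric.ball x (Metric.infDist x A))) ≤ C

/-- A `C`-quasi-geodesic on a set `s ⊆ ℝ`. -/
def IsQuasiGeodesicOn (C : ℝ) (f : ℝ → X) (s : Set ℝ) : Prop :=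
  ContinuousOn f s ∧ ∀ u ∈ s, ∀ v ∈ s,
    |u - v| / C - C ≤ dist (f u) (f v) ∧ dist (f u) (f v) ≤ C * |u - v| + C

/-- A contraction gauge: a non-decreasing function `K : ℝ≥0 → ℝ≥0 ∪ {∞}` with
`K r ≥ 4r + 1`. -/
structure ContractionGauge where
  K : ℝ → ℝ≥0∞
  mono : ∀ ⦃r s : ℝ⦄, 0 ≤ r → r ≤ s → K r ≤ K s
  lb : ∀ r : ℝ, 0 ≤ r → ENNReal.ofReal (4 * r + 1) ≤ K r

/-- A contraction gauge is full if it never takes the value `∞`. -/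
def ContractionGauge.Full (K : ContractionGauge) : Prop := ∀ r : ℝ, K.K r ≠ ⊤

/-- The pair `(x, y)` is `K`-anti-contracting: `d(x,y) ≥ 1` and no subsegment of any
geodesic from `x` to `y` of length at least `K r` is `r`-thin, for any `r ≥ 0`. -/
def AntiContracting (K : ContractionGauge) (x y : X) : Prop :=
  1 ≤ dist x y ∧ ∀ r : ℝ, 0 ≤ r → ∀ γ : GeoSeg X, γ.src = x → γ.tgt = y →
    ∀ σ : GeoSeg X, Subseg σ γ → K.K r ≤ ENNReal.ofReal σ.len → ¬ IsThin r σ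

open Classical in
/-- Cost of a single step in a chain in the contraction space: anti-contracting pairs
are joined by an edge of length one. -/
noncomputable def stepCost (K : ContractionGauge) (a b : X) : ℝ :=
  if AntiContracting K a b then min (dist a b) 1 else dist a b

/-- Total cost of a chain of points. -/
noncomputable def chainCost (K : ContractionGauge) : List X → ℝ
  | [] => 0
  | [_] => 0
  | a :: b :: l => stepCost K a b + chainCost K (b :: l)

/-- The path metric of the `K`-contraction space `X̂_K`, restricted to `X`
(which is `1/2`-dense in `X̂_K`). -/
noncomputable def hatDist (K : ContractionGauge) (x y : X) : ℝ :=
  sInf {c : ℝ | ∃ l : List X, l.head? = some x ∧ l.getLast? = some y ∧ c = chainCost K l}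

/-- Four-point (Gromov) hyperbolicity for a distance function. -/
def FourPointHyp {α : Type*} (d : α → α → ℝ) (δ : ℝ) : Prop :=
  ∀ w x y z : α, d x z + d y w ≤ max (d x y + d z w) (d y z + d x w) + 2 * δ

/-- The contraction gauge `K(r) = 10r + 1`, defining "the" contraction space `X̂`. -/
noncomputable def tenGauge : ContractionGauge where
  K r := ENNReal.ofReal (10 * r + 1)
  mono := by
    intro r s hr hrs
    exact ENNReal.ofReal_le_ofReal (by linarith)
  lb := by
    intro r hr
    exact ENNReal.ofReal_le_ofReal (by linarith)

section ThinAux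

variable {X : Type*} [MetricSpace X]

namespace GeoSeg

@[simp] lemma mem_im' {γ : GeoSeg X} {q : X} :
    q ∈ γ.im ↔ ∃ u ∈ Set.Icc (0:ℝ) γ.len, γ.f u = q := Iff.rfl

/-- Reversal of a geodesic segment. -/
def rev (σ : GeoSeg X) : GeoSeg X where
  len := σ.len
  len_nonneg := σ.len_nonneg
  f := fun t => σ.f (σ.len - t)
  isom := by
    intro u hu v hv
    rw [σ.isom (σ.len - u) ⟨by linarith [hu.2], by linarith [hu.1]⟩
        (σ.len - v) ⟨by linarith [hv.2], by linarith [hv.1]⟩,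
      show σ.len - u - (σ.len - v) = v - u by ring, abs_sub_comm]

@[simp] lemma rev_src (σ : GeoSeg X) : σ.rev.src = σ.tgt := by
  show σ.f (σ.len - 0) = σ.f σ.len
  rw [sub_zero]

@[simp] lemma rev_tgt (σ : GeoSeg X) : σ.rev.tgt = σ.src := by
  show σ.f (σ.len - σ.len) = σ.f 0
  rw [sub_self]

@[simp] lemma rev_im (σ : GeoSeg X) : σ.rev.im = σ.im := by
  unfold im rev
  ext q
  simp only [Set.mem_image, Set.mem_Icc]
  constructor
  · rintro ⟨u, hu, rfl⟩
    exact ⟨σ.len - u, ⟨by linarith [hu.2], by linarith [hu.1]⟩, rfl⟩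
  · rintro ⟨u, hu, rfl⟩
    exact ⟨σ.len - u, ⟨by linarith [hu.2], by linarith [hu.1]⟩, by rw [sub_sub_cancel]⟩

/-- Restriction of a geodesic segment to `[a, b]`. -/
def restrict (γ : GeoSeg X) (a b : ℝ) (h0 : 0 ≤ a) (hab : a ≤ b) (hb : b ≤ γ.len) : GeoSeg X where
  len := b - a
  len_nonneg := by linarith
  f := fun t => γ.f (a + t)
  isom := by
    intro u hu v hv
    rw [γ.isom (a + u) ⟨by linarith [hu.1], by linarith [hu.2]⟩
        (a + v) ⟨by linarith [hv.1], by linarith [hv.2]⟩]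
    congr 1
    ring

variable {γ : GeoSeg X} {a b : ℝ} {h0 : 0 ≤ a} {hab : a ≤ b} {hb : b ≤ γ.len}

@[simp] lemma restrict_len : (γ.restrict a b h0 hab hb).len = b - a := rfl

@[simp] lemma restrict_f (t : ℝ) : (γ.restrict a b h0 hab hb).f t = γ.f (a + t) := rfl

@[simp] lemma restrict_src : (γ.restrict a b h0 hab hb).src = γ.f a := by
  show γ.f (a + 0) = γ.f a
  rw [add_zero]

@[simp] lemma restrict_tgt : (γ.restrict a b h0 hab hb).tgt = γ.f b := by
  show γ.f (a + (b - a)) = γ.f b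
  congr 1
  ring

lemma mem_restrict_im {q : X} :
    q ∈ (γ.restrict a b h0 hab hb).im ↔ ∃ u ∈ Set.Icc a b, γ.f u = q := by
  unfold im restrict
  simp only [Set.mem_image, Set.mem_Icc]
  constructor
  · rintro ⟨u, hu, rfl⟩
    exact ⟨a + u, ⟨by linarith [hu.1], by linarith [hu.2]⟩, rfl⟩
  · rintro ⟨u, hu, rfl⟩
    exact ⟨u - a, ⟨by linarith [hu.1], by linarith [hu.2]⟩, by rw [show a + (u - a) = u by ring]⟩

lemma continuousOn (γ : GeoSeg X) : ContinuousOn γ.f (Set.Icc (0:ℝ) γ.len) := by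
  intro x hx
  rw [Metric.continuousWithinAt_iff]
  intro ε hε
  refine ⟨ε, hε, fun y hy hxy => ?_⟩
  rw [γ.isom y hy x hx]
  rwa [Real.dist_eq] at hxy

/-- First and last parameters of a geodesic segment at `infDist ≤ C` from a set. -/
lemma exists_first_last (γ : GeoSeg X) (P : Set X) (C : ℝ)
    (hne : ∃ u, u ∈ Set.Icc (0:ℝ) γ.len ∧ Metric.infDist (γ.f u) P ≤ C) :
    ∃ a b, a ∈ Set.Icc (0:ℝ) γ.len ∧ b ∈ Set.Icc (0:ℝ) γ.len ∧
      Metric.infDist (γ.f a) P ≤ C ∧ Metric.infDist (γ.f b) P ≤ C ∧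
      ∀ u ∈ Set.Icc (0:ℝ) γ.len, Metric.infDist (γ.f u) P ≤ C → a ≤ u ∧ u ≤ b := by
  have hclamp : ∀ v : ℝ, max 0 (min v γ.len) ∈ Set.Icc (0:ℝ) γ.len := fun v =>
    ⟨le_max_left _ _, max_le γ.len_nonneg (min_le_right _ _)⟩
  have hclamp_eq : ∀ v ∈ Set.Icc (0:ℝ) γ.len, max 0 (min v γ.len) = v := by
    intro v hv
    rw [min_eq_left hv.2, max_eq_right hv.1]
  set g : ℝ → ℝ := fun v => Metric.infDist (γ.f (max 0 (min v γ.len))) P with hgdef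
  have hclampc : Continuous fun v : ℝ => max 0 (min v γ.len) :=
    continuous_const.max (continuous_id.min continuous_const)
  have hcomp : Continuous fun v : ℝ => γ.f (max 0 (min v γ.len)) :=
    γ.continuousOn.comp_continuous hclampc hclamp
  have hgc : Continuous g := (Metric.continuous_infDist_pt P).comp hcomp
  set S : Set ℝ := Set.Icc (0:ℝ) γ.len ∩ g ⁻¹' Set.Iic C with hSdef
  have hmem : ∀ v, v ∈ S ↔ v ∈ Set.Icc (0:ℝ) γ.len ∧ Metric.infDist (γ.f v) P ≤ C := by
    intro v
    constructor
    · rintro ⟨hv1, hv2⟩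
      refine ⟨hv1, ?_⟩
      have : g v ≤ C := hv2
      rwa [hgdef, show (fun v => Metric.infDist (γ.f (max 0 (min v γ.len))) P) v
        = Metric.infDist (γ.f (max 0 (min v γ.len))) P from rfl, hclamp_eq v hv1] at this
    · rintro ⟨hv1, hv2⟩
      refine ⟨hv1, ?_⟩
      show g v ≤ C
      rw [hgdef]
      simpa [hclamp_eq v hv1] using hv2
  have hScomp : IsCompact S := isCompact_Icc.inter_right (isClosed_Iic.preimage hgc)
  obtain ⟨u₀, hu₀, hu₀le⟩ := hne
  have hSne : S.Nonempty := ⟨u₀, (hmem u₀).2 ⟨hu₀, hu₀le⟩⟩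
  have haS := (hmem _).1 (hScomp.sInf_mem hSne)
  have hbS := (hmem _).1 (hScomp.sSup_mem hSne)
  refine ⟨sInf S, sSup S, haS.1, hbS.1, haS.2, hbS.2, ?_⟩
  intro u hu hle
  have huS : u ∈ S := (hmem u).2 ⟨hu, hle⟩
  exact ⟨csInf_le hScomp.bddBelow huS, le_csSup hScomp.bddAbove huS⟩

end GeoSeg

lemma infDist_le_of_mem_cthickening'' {δ : ℝ} (hδ : 0 ≤ δ) {x : X} {E : Set X}
    (h : x ∈ Metric.cthickening δ E) : Metric.infDist x E ≤ δ := by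
  rw [Metric.mem_cthickening_iff] at h
  have h2 : (EMetric.infEdist x E).toReal ≤ (ENNReal.ofReal δ).toReal :=
    ENNReal.toReal_mono ENNReal.ofReal_ne_top h
  rwa [ENNReal.toReal_ofReal hδ] at h2

end ThinAux

/-- In a space hyperbolic relative to peripherals `Peripherals` with projection
constant `C`, if a geodesic `[x, y]` has a long intersection with the `C`-neighbourhood
of a peripheral `P` which is far from `x` in the coned-off metric, then `[x, y]` contains
a `5C`-thin subsegment of length at least `50C + 1`; hence `(x, y)` is not
`K`-anti-contracting for any gauge `K` with `K(5C) ≤ 50C + 1`. -/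
theorem deep_peripheral_intersection_gives_thin_subsegment
    {X : Type*} [MetricSpace X] (hX : GeodSpace X)
    (Peripherals : Set (Set X)) (π : Set X → X → X) (C : ℝ) (hC : 0 < C)
    (hproj : ∀ P ∈ Peripherals, ∀ x : X, π P x ∈ P ∧ ∀ p ∈ P, dist x (π P x) ≤ dist x p)
    (h2 : ∀ P ∈ Peripherals, ∀ x : X, ∀ p ∈ P,
      dist p (π P x) ≤ C + (dist x p - Metric.infDist x P))
    (h3 : ∀ P ∈ Peripherals, ∀ γ : GeoSeg X, (∀ q ∈ γ.im, C ≤ dist q (π P γ.src)) →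
      dist (π P γ.src) (π P γ.tgt) ≤ C)
    (h4 : ∀ P ∈ Peripherals, ∀ γ : GeoSeg X, ∀ s t : ℝ,
      s ∈ Set.Icc (0:ℝ) γ.len → t ∈ Set.Icc (0:ℝ) γ.len →
      Metric.infDist (γ.f s) P ≤ C → Metric.infDist (γ.f t) P ≤ C →
      (∀ u ∈ Set.Icc (0:ℝ) γ.len, Metric.infDist (γ.f u) P ≤ C → s ≤ u ∧ u ≤ t) →
      ∀ u ∈ Set.Icc s t, Metric.infDist (γ.f u) P ≤ 2 * C)
    (dcone : X → X → ℝ) (hdcone : ∀ a b : X, dcone a b ≤ dist a b)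
    (x y : X) (γ : GeoSeg X) (hγs : γ.src = x) (hγt : γ.tgt = y)
    (P : Set X) (hP : P ∈ Peripherals) (D : ℝ) (hD : 50 * C + 1 ≤ D)
    (hdiam : D ≤ Metric.diam (Metric.cthickening C P ∩ γ.im))
    (s : ℝ) (hs : s ∈ Set.Icc (0:ℝ) γ.len) (hsP : Metric.infDist (γ.f s) P ≤ C)
    (hsfirst : ∀ t ∈ Set.Icc (0:ℝ) γ.len, Metric.infDist (γ.f t) P ≤ C → s ≤ t)
    (hz : D ≤ dcone x (γ.f s)) :
    (∃ σ : GeoSeg X, Subseg σ γ ∧ 50 * C + 1 ≤ σ.len ∧ IsThin (5 * C) σ) ∧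
      ∀ K : ContractionGauge, K.K (5 * C) ≤ ENNReal.ofReal (50 * C + 1) →
        ¬ AntiContracting K x y := by
  classical
  have hπ : ∀ w : X, π P w ∈ P ∧ ∀ p ∈ P, dist w (π P w) ≤ dist w p := hproj P hP
  have hprojmem : ∀ w : X, π P w ∈ P := fun w => (hπ w).1
  have hPne : P.Nonempty := ⟨π P x, hprojmem x⟩
  have hprojdist : ∀ w : X, dist w (π P w) = Metric.infDist w P := by
    intro w
    refine le_antisymm ?_ (Metric.infDist_le_dist_of_mem (hprojmem w))
    by_contra hlt
    push_neg at hlt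
    obtain ⟨p, hp, hplt⟩ := (Metric.infDist_lt_iff hPne).1 hlt
    exact absurd ((hπ w).2 p hp) (not_le.2 hplt)
  set L : ℝ := 50 * C + 1 with hLdef
  have hL0 : 0 < L := by rw [hLdef]; linarith
  have hs0 : 0 ≤ s := hs.1
  have hslen : s ≤ γ.len := hs.2
  have hx0 : γ.f 0 = x := hγs
  have hdist0s : dist x (γ.f s) = s := by
    rw [← hx0, γ.isom 0 ⟨le_rfl, γ.len_nonneg⟩ s hs, zero_sub, abs_neg, abs_of_nonneg hs0]
  have hsD : D ≤ s := by
    have h1 := hdcone x (γ.f s)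
    linarith [hz]
  have hLs : L ≤ s := le_trans hD hsD
  -- last point T of γ within C of P
  obtain ⟨a₀, T, ha₀mem, hTmem, ha₀near, hTnear, hfl⟩ :=
    γ.exists_first_last P C ⟨s, hs, hsP⟩
  have hprop : ∀ u ∈ Set.Icc (0:ℝ) γ.len, Metric.infDist (γ.f u) P ≤ C → s ≤ u ∧ u ≤ T :=
    fun u hu hle => ⟨hsfirst u hu hle, (hfl u hu hle).2⟩
  have h2Cnear : ∀ u ∈ Set.Icc s T, Metric.infDist (γ.f u) P ≤ 2 * C :=
    h4 P hP γ s T hs hTmem hsP hTnear hprop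
  have hsT : s ≤ T := (hprop s hs hsP).2
  -- D ≤ T - s via hdiam
  have himsub : Metric.cthickening C P ∩ γ.im ⊆ γ.f '' Set.Icc s T := by
    rintro q ⟨hq1, hq2⟩
    obtain ⟨u, hu, rfl⟩ := GeoSeg.mem_im'.1 hq2
    have hle : Metric.infDist (γ.f u) P ≤ C := infDist_le_of_mem_cthickening'' hC.le hq1
    exact ⟨u, ⟨(hprop u hu hle).1, (hprop u hu hle).2⟩, rfl⟩
  have hbdd : Bornology.IsBounded (γ.f '' Set.Icc s T) :=
    (isCompact_Icc.image_of_continuousOn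
      (γ.continuousOn.mono (Set.Icc_subset_Icc hs0 hTmem.2))).isBounded
  have hdiam2 : Metric.diam (γ.f '' Set.Icc s T) ≤ T - s := by
    apply Metric.diam_le_of_forall_dist_le (by linarith)
    rintro q ⟨u, hu, rfl⟩ q' ⟨v, hv, rfl⟩
    rw [γ.isom u ⟨le_trans hs0 hu.1, le_trans hu.2 hTmem.2⟩
        v ⟨le_trans hs0 hv.1, le_trans hv.2 hTmem.2⟩, abs_le]
    constructor <;> linarith [hu.1, hu.2, hv.1, hv.2]
  have hDT : D ≤ T - s := le_trans hdiam (le_trans (Metric.diam_mono himsub hbdd) hdiam2)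
  have hsLT : s + L ≤ T := by linarith [hD]
  -- the subsegment σ centered at the entry point γ.f s
  have hgeo1 : 0 ≤ s - L / 2 := by linarith
  have hgeo2 : s - L / 2 ≤ s + L / 2 := by linarith
  have hgeo3 : s + L / 2 ≤ γ.len := by linarith [hTmem.2]
  set σ : GeoSeg X := γ.restrict (s - L/2) (s + L/2) hgeo1 hgeo2 hgeo3 with hσ
  have hσlen : σ.len = L := by rw [hσ, GeoSeg.restrict_len]; ring
  have hσf : ∀ t : ℝ, σ.f t = γ.f ((s - L/2) + t) := fun t => by rw [hσ, GeoSeg.restrict_f]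
  have hσsub : Subseg σ γ := by
    refine ⟨s - L/2, hgeo1, ?_, fun t ht => hσf t⟩
    rw [hσlen]
    linarith [hTmem.2]
  have hσmid : σ.mid = γ.f s := by
    show σ.f (σ.len / 2) = γ.f s
    rw [hσf, hσlen]
    congr 1
    ring
  -- basic facts
  have F0 : ∀ v, 0 ≤ v → v < s → C < Metric.infDist (γ.f v) P := by
    intro v hv0 hvs
    by_contra hcon
    push_neg at hcon
    exact absurd (hsfirst v ⟨hv0, le_trans hvs.le hslen⟩ hcon) (not_le.2 hvs)
  have hpzC : dist (γ.f s) (π P (γ.f s)) ≤ C := by rw [hprojdist]; exact hsP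
  have hdistmidsrc : dist (γ.f (s - L/2)) (γ.f s) = L / 2 := by
    rw [γ.isom _ ⟨hgeo1, by linarith⟩ s hs,
      show s - L/2 - s = -(L/2) by ring, abs_neg, abs_of_nonneg (by linarith)]
  -- F2 : the projection of σ.src is 2C-close to the entry point
  have F2 : dist (π P (γ.f (s - L/2))) (γ.f s) ≤ 2 * C := by
    by_contra hcon
    push_neg at hcon
    have hd2 : s - L/2 ≤ s := by linarith
    have hAll : ∀ q ∈ (γ.restrict (s - L/2) s hgeo1 hd2 hslen).im,
        C ≤ dist q (π P (γ.restrict (s - L/2) s hgeo1 hd2 hslen).src) := by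
      intro q hq
      rw [GeoSeg.restrict_src]
      obtain ⟨u, hu, rfl⟩ := GeoSeg.mem_restrict_im.1 hq
      rcases lt_or_eq_of_le hu.2 with h' | h'
      · exact le_of_lt (lt_of_lt_of_le (F0 u (le_trans hgeo1 hu.1) h')
          (Metric.infDist_le_dist_of_mem (hprojmem _)))
      · rw [h']
        rw [dist_comm]
        linarith
    have hkey := h3 P hP _ hAll
    rw [GeoSeg.restrict_src, GeoSeg.restrict_tgt] at hkey
    have htr := dist_triangle (π P (γ.f (s - L/2))) (π P (γ.f s)) (γ.f s)
    have hc : dist (π P (γ.f s)) (γ.f s) ≤ C := by rw [dist_comm]; exact hpzC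
    linarith
  -- F3' : σ.src is far from P (gate property via h2)
  have F3' : L/2 - 5*C ≤ Metric.infDist (γ.f (s - L/2)) P := by
    by_contra hcon
    push_neg at hcon
    obtain ⟨p, hp, hplt⟩ := (Metric.infDist_lt_iff hPne).1 hcon
    have hh2 := h2 P hP (γ.f (s - L/2)) p hp
    have hpa : Metric.infDist (γ.f (s - L/2)) P = dist (γ.f (s - L/2)) (π P (γ.f (s - L/2))) :=
      (hprojdist _).symm
    have t1 : L/2 - 2*C ≤ dist (γ.f (s - L/2)) (π P (γ.f (s - L/2))) := by
      have htr := dist_triangle (γ.f (s - L/2)) (π P (γ.f (s - L/2))) (γ.f s)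
      linarith [hdistmidsrc, F2]
    have t2 : dist (γ.f s) p - 2*C ≤ dist (π P (γ.f (s - L/2))) p := by
      have htr := dist_triangle (γ.f s) (π P (γ.f (s - L/2))) p
      have hzπ : dist (γ.f s) (π P (γ.f (s - L/2))) ≤ 2*C := by rw [dist_comm]; exact F2
      linarith
    have hco : dist p (π P (γ.f (s - L/2))) = dist (π P (γ.f (s - L/2))) p := dist_comm _ _
    have hd0 : (0:ℝ) ≤ dist (γ.f s) p := dist_nonneg
    linarith
  -- the thinness of σ
  have hthin : IsThin (5 * C) σ := by
    intro γ₁ γ₂ γ₃ γ₄ h12 h23 h34 h41 hsub1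
    by_contra hcon
    push_neg at hcon
    obtain ⟨a, ha0, halen, haf⟩ := hsub1
    rw [hσlen] at halen
    have hz1 : γ₁.f (a + L/2) = γ.f s := by
      have h' := (haf (L/2) ⟨by linarith, by rw [hσlen]; linarith⟩).symm
      rw [h', hσf]
      congr 1
      ring
    have hasrc : γ₁.f a = γ.f (s - L/2) := by
      have h'' := haf 0 ⟨le_rfl, by rw [hσlen]; linarith⟩
      rw [add_zero] at h''
      rw [← h'', hσf, add_zero]
    have hatgt : γ₁.f (a + L) = γ.f (s + L/2) := by
      have h'' := haf L ⟨hL0.le, hσlen.ge⟩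
      rw [← h'', hσf]
      congr 1
      ring
    have hav : ∀ q, q ∈ γ₂.im ∪ γ₃.im ∪ γ₄.im → 5*C < dist q (γ.f s) := by
      intro q hq
      have := hcon q hq
      rwa [hσmid] at this
    -- F4 : no point of γ₁ before the entry point is C-close to P
    have F4 : ∀ u, 0 ≤ u → u < a + L/2 → u ≤ γ₁.len → C < Metric.infDist (γ₁.f u) P := by
      intro u hu0 hult hulen
      rcases lt_or_ge u a with hua | hua
      · by_contra hcontr
        push_neg at hcontr
        obtain ⟨a₁, b₁, ha₁m, hb₁m, ha₁n, hb₁n, hfl₁⟩ :=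
          γ₁.exists_first_last P C ⟨u, ⟨hu0, hulen⟩, hcontr⟩
        have hzmem : a + L/2 ∈ Set.Icc (0:ℝ) γ₁.len := ⟨by linarith, by linarith⟩
        have hznear : Metric.infDist (γ₁.f (a + L/2)) P ≤ C := by rw [hz1]; exact hsP
        have hA := hfl₁ u ⟨hu0, hulen⟩ hcontr
        have hB := hfl₁ (a + L/2) hzmem hznear
        have hres := h4 P hP γ₁ a₁ b₁ ha₁m hb₁m ha₁n hb₁n hfl₁ a
          ⟨by linarith [hA.1], by linarith [hB.2]⟩
        rw [hasrc] at hres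
        rw [hLdef] at F3' hres
        linarith
      · have ht := haf (u - a) ⟨by linarith, by rw [hσlen]; linarith⟩
        rw [show a + (u - a) = u by ring] at ht
        have ht2 : γ₁.f u = γ.f ((s - L/2) + (u - a)) := by rw [← ht, hσf]
        rw [ht2]
        exact F0 _ (by linarith) (by linarith)
    -- F5 : the projection of γ₁.src is 2C-close to the entry point
    have hb2 : (0:ℝ) ≤ a + L/2 := by linarith
    have hb3 : a + L/2 ≤ γ₁.len := by linarith
    have F5 : dist (π P γ₁.src) (γ.f s) ≤ 2*C := by
      by_contra hcontr
      push_neg at hcontr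
      have hAll : ∀ q ∈ (γ₁.restrict 0 (a + L/2) le_rfl hb2 hb3).im,
          C ≤ dist q (π P (γ₁.restrict 0 (a + L/2) le_rfl hb2 hb3).src) := by
        intro q hq
        rw [GeoSeg.restrict_src]
        obtain ⟨u, hu, rfl⟩ := GeoSeg.mem_restrict_im.1 hq
        rcases lt_or_eq_of_le hu.2 with h' | h'
        · have := F4 u hu.1 h' (by linarith)
          have hle := Metric.infDist_le_dist_of_mem
            (s := P) (x := γ₁.f u) (y := π P (γ₁.f 0)) (hprojmem _)
          exact le_of_lt (lt_of_lt_of_le this hle)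
        · rw [h', hz1, dist_comm]
          have : γ₁.src = γ₁.f 0 := rfl
          rw [← this]
          linarith
      have hkey := h3 P hP _ hAll
      rw [GeoSeg.restrict_src, GeoSeg.restrict_tgt, hz1] at hkey
      have hsrc0 : γ₁.src = γ₁.f 0 := rfl
      rw [← hsrc0] at hkey
      have htr := dist_triangle (π P γ₁.src) (π P (γ.f s)) (γ.f s)
      have hc : dist (π P (γ.f s)) (γ.f s) ≤ C := by rw [dist_comm]; exact hpzC
      linarith
    -- chain step along the sides
    have step : ∀ (η : GeoSeg X) (k : ℝ), dist (π P η.src) (γ.f s) ≤ k → k + C ≤ 5*C →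
        (∀ q ∈ η.im, 5*C < dist q (γ.f s)) → dist (π P η.tgt) (γ.f s) ≤ k + C := by
      intro η k hk hk5 havoid
      by_cases hyp : ∀ q ∈ η.im, C ≤ dist q (π P η.src)
      · have hkey := h3 P hP η hyp
        have htr := dist_triangle (π P η.tgt) (π P η.src) (γ.f s)
        have hcomm : dist (π P η.tgt) (π P η.src) = dist (π P η.src) (π P η.tgt) :=
          dist_comm _ _
        linarith
      · push_neg at hyp
        obtain ⟨q, hq, hlt⟩ := hyp
        have htr := dist_triangle q (π P η.src) (γ.f s)
        linarith [havoid q hq]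
    have hstep1 : dist (π P γ₄.src) (γ.f s) ≤ 2*C + C := by
      have h' := step γ₄.rev (2*C)
        (by rw [GeoSeg.rev_src, h41]; exact F5) (by linarith)
        (fun q hq => hav q (Set.mem_union_right _ (by rwa [GeoSeg.rev_im] at hq)))
      rwa [GeoSeg.rev_tgt] at h'
    have hstep2 : dist (π P γ₃.src) (γ.f s) ≤ (2*C + C) + C := by
      have h' := step γ₃.rev (2*C + C)
        (by rw [GeoSeg.rev_src, h34]; exact hstep1) (by linarith)
        (fun q hq => hav q (Set.mem_union_left _ (Set.mem_union_right _
          (by rwa [GeoSeg.rev_im] at hq))))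
      rwa [GeoSeg.rev_tgt] at h'
    have hstep3 : dist (π P γ₂.src) (γ.f s) ≤ ((2*C + C) + C) + C := by
      have h' := step γ₂.rev ((2*C + C) + C)
        (by rw [GeoSeg.rev_src, h23]; exact hstep2) (by linarith)
        (fun q hq => hav q (Set.mem_union_left _ (Set.mem_union_left _
          (by rwa [GeoSeg.rev_im] at hq))))
      rwa [GeoSeg.rev_tgt] at h'
    have hr4 : dist (π P γ₁.tgt) (γ.f s) ≤ 5*C := by
      rw [h12]
      linarith
    -- final contradiction via the right tail of γ₁
    have htail1 : (0:ℝ) ≤ a + L := by linarith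
    have hfarim : ∀ q ∈ ((γ₁.restrict (a + L) γ₁.len htail1 halen le_rfl).rev).im,
        L/2 ≤ dist q (γ.f s) := by
      intro q hq
      rw [GeoSeg.rev_im] at hq
      obtain ⟨u, hu, rfl⟩ := GeoSeg.mem_restrict_im.1 hq
      rw [← hz1, γ₁.isom u ⟨by linarith [hu.1], hu.2⟩ (a + L/2) ⟨by linarith, by linarith⟩,
        abs_of_nonneg (by linarith [hu.1])]
      linarith [hu.1]
    have hTRsrc : ((γ₁.restrict (a + L) γ₁.len htail1 halen le_rfl).rev).src = γ₁.tgt := by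
      rw [GeoSeg.rev_src, GeoSeg.restrict_tgt]
      rfl
    have hTRtgt : ((γ₁.restrict (a + L) γ₁.len htail1 halen le_rfl).rev).tgt
        = γ.f (s + L/2) := by
      rw [GeoSeg.rev_tgt, GeoSeg.restrict_src, hatgt]
    by_cases hyp : ∀ q ∈ ((γ₁.restrict (a + L) γ₁.len htail1 halen le_rfl).rev).im,
        C ≤ dist q (π P ((γ₁.restrict (a + L) γ₁.len htail1 halen le_rfl).rev).src)
    · have hkey := h3 P hP _ hyp
      rw [hTRsrc, hTRtgt] at hkey
      have hp2 : Metric.infDist (γ.f (s + L/2)) P ≤ 2*C :=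
        h2Cnear (s + L/2) ⟨by linarith, by linarith⟩
      have hp2' : dist (γ.f (s + L/2)) (π P (γ.f (s + L/2))) ≤ 2*C := by
        rw [hprojdist]; exact hp2
      have hd2' : dist (γ.f (s + L/2)) (γ.f s) = L/2 := by
        rw [γ.isom _ ⟨by linarith, hgeo3⟩ s hs, show s + L/2 - s = L/2 by ring,
          abs_of_nonneg (by linarith)]
      have t1 := dist_triangle (γ.f (s + L/2)) (π P (γ.f (s + L/2))) (γ.f s)
      have t2 := dist_triangle (π P (γ.f (s + L/2))) (π P γ₁.tgt) (γ.f s)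
      have hc : dist (π P (γ.f (s + L/2))) (π P γ₁.tgt)
          = dist (π P γ₁.tgt) (π P (γ.f (s + L/2))) := dist_comm _ _
      rw [hLdef] at hd2'
      linarith
    · push_neg at hyp
      obtain ⟨q, hq, hlt⟩ := hyp
      rw [hTRsrc] at hlt
      have htr := dist_triangle q (π P γ₁.tgt) (γ.f s)
      have hfar := hfarim q hq
      rw [hLdef] at hfar
      linarith
  refine ⟨⟨σ, hσsub, hσlen.ge, hthin⟩, ?_⟩
  intro K hK hanti
  exact (hanti.2 (5*C) (by linarith) γ hγs hγt σ hσsub (by rw [hσlen]; exact hK)) hthin
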